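/- Let Q: ℝ → ℝ be measurable, V ∈ ℝ, F(a) = 𝟙{Q(a) > V}, and G(μ, σ) = E_{y∼N(0,1)}[F(μ + yσ)]. Define (σ')² = E_{a∼N(μ,σ²)}[σ²·𝟙{Q(a) ≤ V} + (a−μ)²·𝟙{Q(a) > V}]. Then (σ')² = σ² + 2σ⁴·∂G/∂(σ²)(μ, σ). -/

import Mathlib

set_option maxHeartbeats 1000000
open MeasureTheory ProbabilityTheory Real Filter Metric
open scoped NNReal ENNReal

noncomputable def gpdf (μ : ℝ) (v : ℝ) (a : ℝ) : ℝ :=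
  (Real.sqrt (2 * π * v))⁻¹ * Real.exp (-(a - μ)^2 / (2 * v))

lemma gpdf_nonneg (μ v a : ℝ) : 0 ≤ gpdf μ v a := by
  unfold gpdf; positivity

lemma gpdf_meas (μ v : ℝ) : Measurable (gpdf μ v) :=
  ((((measurable_id.sub_const μ).pow_const 2).neg.div_const (2*v)).exp.const_mul _)

lemma gpdf_eq (μ : ℝ) {v : ℝ} (hv : 0 ≤ v) :
    gaussianPDFReal μ v.toNNReal = gpdf μ v := by
  funext a
  rw [gaussianPDFReal, gpdf, Real.coe_toNNReal v hv]

lemma gpdf_int (μ : ℝ) {v : ℝ} (hv : 0 < v) : Integrable (gpdf μ v) := by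
  rw [← gpdf_eq μ hv.le]; exact integrable_gaussianPDFReal μ v.toNNReal

lemma gpdf_hasDerivAt (μ a : ℝ) {v : ℝ} (hv : 0 < v) :
    HasDerivAt (fun w => gpdf μ w a)
      (gpdf μ v a * ((a - μ)^2 / (2 * v^2) - 1 / (2 * v))) v := by
  have h2πv : 0 < 2 * π * v := by positivity
  have hs0 : Real.sqrt (2 * π * v) ≠ 0 := by positivity
  have h1 : HasDerivAt (fun w : ℝ => Real.sqrt (2 * π * w))
      (1 / (2 * Real.sqrt (2 * π * v)) * (2 * π)) v := by
    have := (Real.hasDerivAt_sqrt (ne_of_gt h2πv)).comp v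
      ((hasDerivAt_id v).const_mul (2 * π))
    simpa [Function.comp_def, mul_comm] using this
  have h1' : HasDerivAt (fun w : ℝ => (Real.sqrt (2 * π * w))⁻¹)
      (-(1 / (2 * Real.sqrt (2 * π * v)) * (2 * π)) / (Real.sqrt (2 * π * v))^2) v :=
    h1.inv hs0
  have h2i : HasDerivAt (fun w : ℝ => -(a - μ)^2 / (2 * w))
      ((a - μ)^2 / (2 * v^2) * 1) v := by
    have hbase : HasDerivAt (fun w : ℝ => 2 * w) 2 v := by
      simpa using (hasDerivAt_id v).const_mul (2:ℝ)
    have := (hbase.inv (by positivity)).const_mul (-(a - μ)^2)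
    refine this.congr_deriv ?_
    ring
  have h2 : HasDerivAt (fun w : ℝ => Real.exp (-(a - μ)^2 / (2 * w)))
      (Real.exp (-(a - μ)^2 / (2 * v)) * ((a - μ)^2 / (2 * v^2) * 1)) v := h2i.exp
  have hmul := h1'.mul h2
  set s := Real.sqrt (2 * π * v) with hsdef
  have hsq : s ^ 2 = 2 * π * v := Real.sq_sqrt (le_of_lt h2πv)
  have key : -(1 / (2 * s) * (2 * π)) / s ^ 2 = s⁻¹ * (-(1 / (2 * v))) := by
    rw [hsq]
    field_simp
  refine hmul.congr_deriv ?_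
  rw [key, gpdf]
  ring

lemma integrable_sq_exp {b : ℝ} (hb : 0 < b) :
    Integrable (fun x : ℝ => x^2 * Real.exp (-b * x^2)) := by
  have h := integrable_rpow_mul_exp_neg_mul_sq hb (s := 2) (by norm_num)
  refine h.congr (ae_of_all _ fun x => ?_)
  simp only [Real.rpow_two]

lemma gauss_param_deriv (μ σ : ℝ) (hσ : 0 < σ) (f : ℝ → ℝ) (hf : Measurable f)
    (hf0 : ∀ a, 0 ≤ f a) (hf1 : ∀ a, f a ≤ 1) :
    Integrable (fun a => gpdf μ (σ^2) a * ((a-μ)^2/(2*(σ^2)^2) - 1/(2*(σ^2))) * f a) ∧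
    HasDerivAt (fun v => ∫ a, gpdf μ v a * f a)
      (∫ a, gpdf μ (σ^2) a * ((a-μ)^2/(2*(σ^2)^2) - 1/(2*(σ^2))) * f a) (σ^2) := by
  have hv₀ : (0:ℝ) < σ^2 := by positivity
  have hε : (0:ℝ) < σ^2/2 := by positivity
  set c1 : ℝ := (Real.sqrt (π*σ^2))⁻¹ * (2*(σ^2/2)^2)⁻¹ with hc1def
  set c4 : ℝ := (Real.sqrt (π*σ^2))⁻¹ * (σ^2)⁻¹ with hc4def
  set b : ℝ := (3*σ^2)⁻¹ with hbdef
  have hb : 0 < b := by positivity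
  set bound : ℝ → ℝ := fun a =>
    c1 * ((a-μ)^2 * Real.exp (-b*(a-μ)^2)) + c4 * Real.exp (-b*(a-μ)^2) with hbounddef
  have hFmeas : ∀ v : ℝ, AEStronglyMeasurable (fun a => gpdf μ v a * f a)
      (volume : Measure ℝ) := fun v => ((gpdf_meas μ v).mul hf).aestronglyMeasurable
  have hF'meas : ∀ v : ℝ, AEStronglyMeasurable
      (fun a => gpdf μ v a * ((a-μ)^2/(2*v^2) - 1/(2*v)) * f a) (volume : Measure ℝ) := by
    intro v
    exact (((gpdf_meas μ v).mul
      ((((measurable_id.sub_const μ).pow_const 2).div_const _).sub measurable_const)).mul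
        hf).aestronglyMeasurable
  have hFint : Integrable (fun a => gpdf μ (σ^2) a * f a) := by
    refine (gpdf_int μ hv₀).mono (hFmeas _) (ae_of_all _ fun a => ?_)
    simp only [Real.norm_eq_abs, abs_mul, abs_of_nonneg (gpdf_nonneg μ (σ^2) a),
      abs_of_nonneg (hf0 a)]
    nlinarith [hf0 a, hf1 a, gpdf_nonneg μ (σ^2) a]
  have hboundInt : Integrable bound :=
    (((integrable_sq_exp hb).comp_sub_right μ).const_mul c1).add
      (((integrable_exp_neg_mul_sq hb).comp_sub_right μ).const_mul c4)
  have h_bound : ∀ᵐ a ∂(volume : Measure ℝ), ∀ v ∈ ball (σ^2) (σ^2/2),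
      ‖gpdf μ v a * ((a-μ)^2/(2*v^2) - 1/(2*v)) * f a‖ ≤ bound a := by
    refine ae_of_all _ fun a v hv => ?_
    rw [mem_ball, Real.dist_eq, abs_lt] at hv
    have hv1 : σ^2/2 < v := by linarith [hv.1]
    have hv2 : v < 3*σ^2/2 := by linarith [hv.2]
    have hvpos : 0 < v := lt_trans (by positivity) hv1
    have hx : (0:ℝ) ≤ (a-μ)^2/(2*v^2) := by positivity
    have hy : (0:ℝ) ≤ 1/(2*v) := by positivity
    have habs : |(a-μ)^2/(2*v^2) - 1/(2*v)| ≤ (a-μ)^2/(2*v^2) + 1/(2*v) := by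
      rw [abs_le]; constructor <;> nlinarith
    have h1 : ‖gpdf μ v a * ((a-μ)^2/(2*v^2) - 1/(2*v)) * f a‖
        ≤ gpdf μ v a * ((a-μ)^2/(2*v^2) + 1/(2*v)) := by
      rw [Real.norm_eq_abs, abs_mul, abs_mul, abs_of_nonneg (gpdf_nonneg μ v a),
        abs_of_nonneg (hf0 a)]
      have hmono := mul_le_mul_of_nonneg_left habs (gpdf_nonneg μ v a)
      nlinarith [gpdf_nonneg μ v a, hf0 a, hf1 a,
        mul_nonneg (gpdf_nonneg μ v a) (abs_nonneg ((a-μ)^2/(2*v^2) - 1/(2*v)))]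
    have hsp : 0 < Real.sqrt (π*σ^2) := Real.sqrt_pos.mpr (by positivity)
    have hinv : (Real.sqrt (2*π*v))⁻¹ ≤ (Real.sqrt (π*σ^2))⁻¹ := by
      apply inv_anti₀ hsp
      apply Real.sqrt_le_sqrt
      nlinarith [Real.pi_pos]
    have hbv : b * (2*v) ≤ 1 := by
      rw [hbdef, inv_mul_le_iff₀ (by positivity)]
      linarith
    have hexp : Real.exp (-(a-μ)^2 / (2*v)) ≤ Real.exp (-b*(a-μ)^2) := by
      apply Real.exp_le_exp.mpr
      rw [neg_div, neg_mul, neg_le_neg_iff, le_div_iff₀ (by positivity : (0:ℝ) < 2*v)]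
      nlinarith [sq_nonneg (a-μ)]
    have hgle : gpdf μ v a ≤ (Real.sqrt (π*σ^2))⁻¹ * Real.exp (-b*(a-μ)^2) := by
      rw [gpdf]
      exact mul_le_mul hinv hexp (Real.exp_pos _).le (inv_nonneg.mpr hsp.le)
    have hterm : (a-μ)^2/(2*v^2) + 1/(2*v) ≤ (a-μ)^2 * (2*(σ^2/2)^2)⁻¹ + (σ^2)⁻¹ := by
      have ht1 : (2*v^2)⁻¹ ≤ (2*(σ^2/2)^2)⁻¹ := by
        have h := pow_le_pow_left₀ hε.le hv1.le 2
        apply inv_anti₀ (by positivity)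
        linarith
      have ht2 : (2*v)⁻¹ ≤ (σ^2)⁻¹ := by
        apply inv_anti₀ (by positivity); linarith
      rw [div_eq_mul_inv, one_div]
      exact add_le_add (mul_le_mul_of_nonneg_left ht1 (sq_nonneg _)) ht2
    calc ‖gpdf μ v a * ((a-μ)^2/(2*v^2) - 1/(2*v)) * f a‖
        ≤ gpdf μ v a * ((a-μ)^2/(2*v^2) + 1/(2*v)) := h1
      _ ≤ ((Real.sqrt (π*σ^2))⁻¹ * Real.exp (-b*(a-μ)^2))
          * ((a-μ)^2 * (2*(σ^2/2)^2)⁻¹ + (σ^2)⁻¹) :=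
          mul_le_mul hgle hterm (by positivity) (by positivity)
      _ = bound a := by rw [hbounddef, hc1def, hc4def]; ring
  have h_diff : ∀ᵐ a ∂(volume : Measure ℝ), ∀ v ∈ ball (σ^2) (σ^2/2),
      HasDerivAt (fun w => gpdf μ w a * f a)
        (gpdf μ v a * ((a-μ)^2/(2*v^2) - 1/(2*v)) * f a) v := by
    refine ae_of_all _ fun a v hv => ?_
    rw [mem_ball, Real.dist_eq, abs_lt] at hv
    have hvpos : 0 < v := by nlinarith [hv.1, sq_nonneg σ]
    exact (gpdf_hasDerivAt μ a hvpos).mul_const (f a)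
  exact hasDerivAt_integral_of_dominated_loc_of_deriv_le (ball_mem_nhds _ hε)
    (Eventually.of_forall hFmeas) hFint (hF'meas _) h_bound hboundInt h_diff
lemma integral_gaussianReal_eq (μ : ℝ) {v : ℝ} (hv : 0 < v) (g : ℝ → ℝ) :
    ∫ a, g a ∂(gaussianReal μ v.toNNReal) = ∫ a, gpdf μ v a * g a := by
  have hvne : v.toNNReal ≠ 0 := (Real.toNNReal_pos.mpr hv).ne'
  rw [gaussianReal_of_var_ne_zero _ hvne]
  have hpdf : gaussianPDF μ v.toNNReal
      = fun x => ((Real.toNNReal (gaussianPDFReal μ v.toNNReal x) : ℝ≥0) : ℝ≥0∞) := rfl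
  rw [hpdf, integral_withDensity_eq_integral_smul
    ((measurable_gaussianPDFReal μ v.toNNReal).real_toNNReal) g]
  congr 1
  funext a
  rw [NNReal.smul_def, smul_eq_mul, Real.coe_toNNReal _ (gaussianPDFReal_nonneg μ _ a),
    gpdf_eq μ hv.le]

lemma map_gauss (μ : ℝ) {v : ℝ} (hv : 0 < v) :
    (gaussianReal 0 1).map (fun y => μ + y * Real.sqrt v) = gaussianReal μ v.toNNReal := by
  have h1 : (fun y : ℝ => μ + y * Real.sqrt v)
      = (fun x => x + μ) ∘ (fun y => Real.sqrt v * y) := by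
    funext y; simp [Function.comp, mul_comm, add_comm]
  rw [h1, ← Measure.map_map (measurable_add_const μ) (measurable_const_mul _)]
  have h2 : (fun y : ℝ => Real.sqrt v * y) = (Real.sqrt v * ·) := rfl
  rw [h2, gaussianReal_map_const_mul (Real.sqrt v) (μ := 0) (v := 1),
    gaussianReal_map_add_const μ]
  congr 1
  · simp
  · apply NNReal.coe_injective
    simp [Real.sq_sqrt hv.le, Real.coe_toNNReal v hv.le]

lemma gpdf_integral_one (μ : ℝ) {v : ℝ} (hv : 0 < v) : ∫ a, gpdf μ v a = 1 := by
  rw [← gpdf_eq μ hv.le]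
  exact integral_gaussianPDFReal_eq_one μ (Real.toNNReal_pos.mpr hv).ne'

theorem target_variance_es_gradient_step (Q : ℝ → ℝ) (hQ : Measurable Q) (V μ σ : ℝ)
    (hσ : 0 < σ) :
    HasDerivAt
      (fun v : ℝ => ∫ y, (if V < Q (μ + y * Real.sqrt v) then (1:ℝ) else 0)
        ∂(gaussianReal 0 1))
      ((2 * σ ^ 4)⁻¹ *
        ((∫ a, (σ ^ 2 * (if Q a ≤ V then (1:ℝ) else 0)
            + (a - μ) ^ 2 * (if V < Q a then (1:ℝ) else 0))
          ∂(gaussianReal μ (Real.toNNReal (σ ^ 2)))) - σ ^ 2))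
      (σ ^ 2) := by
  have hv₀ : (0:ℝ) < σ^2 := by positivity
  have hf : Measurable (fun a => if V < Q a then (1:ℝ) else 0) :=
    Measurable.ite (measurableSet_lt measurable_const hQ) measurable_const measurable_const
  have hf0 : ∀ a, 0 ≤ (if V < Q a then (1:ℝ) else 0) := fun a => by positivity
  have hf1 : ∀ a, (if V < Q a then (1:ℝ) else 0) ≤ 1 := fun a => by
    by_cases h : V < Q a <;> simp [h]
  obtain ⟨hint, hderiv⟩ := gauss_param_deriv μ σ hσ _ hf hf0 hf1
  -- eventual equality of the two parametrized integrals
  have hev : (fun v : ℝ => ∫ y, (if V < Q (μ + y * Real.sqrt v) then (1:ℝ) else 0)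
        ∂(gaussianReal 0 1))
      =ᶠ[nhds (σ^2)] (fun v => ∫ a, gpdf μ v a * (if V < Q a then (1:ℝ) else 0)) := by
    filter_upwards [eventually_gt_nhds hv₀] with v hv
    have hφ : Measurable fun y : ℝ => μ + y * Real.sqrt v :=
      (measurable_id.mul_const _).const_add μ
    calc (∫ y, (if V < Q (μ + y * Real.sqrt v) then (1:ℝ) else 0) ∂(gaussianReal 0 1))
        = ∫ a, (if V < Q a then (1:ℝ) else 0)
            ∂((gaussianReal 0 1).map (fun y => μ + y * Real.sqrt v)) :=
          (integral_map hφ.aemeasurable hf.aestronglyMeasurable).symm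
      _ = ∫ a, (if V < Q a then (1:ℝ) else 0) ∂(gaussianReal μ v.toNNReal) := by
          rw [map_gauss μ hv]
      _ = ∫ a, gpdf μ v a * (if V < Q a then (1:ℝ) else 0) :=
          integral_gaussianReal_eq μ hv _
  -- value identification
  have hval : (2 * σ ^ 4)⁻¹ *
        ((∫ a, (σ ^ 2 * (if Q a ≤ V then (1:ℝ) else 0)
            + (a - μ) ^ 2 * (if V < Q a then (1:ℝ) else 0))
          ∂(gaussianReal μ (Real.toNNReal (σ ^ 2)))) - σ ^ 2)
      = ∫ a, gpdf μ (σ^2) a * ((a-μ)^2/(2*(σ^2)^2) - 1/(2*(σ^2)))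
          * (if V < Q a then (1:ℝ) else 0) := by
    rw [integral_gaussianReal_eq μ hv₀]
    have hkey : (fun a => gpdf μ (σ^2) a * (σ ^ 2 * (if Q a ≤ V then (1:ℝ) else 0)
            + (a - μ) ^ 2 * (if V < Q a then (1:ℝ) else 0)))
        = fun a => (2*σ^4) * (gpdf μ (σ^2) a * ((a-μ)^2/(2*(σ^2)^2) - 1/(2*(σ^2)))
            * (if V < Q a then (1:ℝ) else 0)) + σ^2 * gpdf μ (σ^2) a := by
      funext a
      by_cases h : V < Q a
      · rw [if_pos h, if_neg (not_le.mpr h)]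
        field_simp
        ring
      · rw [if_neg h, if_pos (not_lt.mp h)]
        ring
    rw [hkey, integral_add (hint.const_mul _) ((gpdf_int μ hv₀).const_mul _),
      integral_const_mul, integral_const_mul, gpdf_integral_one μ hv₀]
    field_simp
    ring
  rw [hval]
  exact hderiv.congr_of_eventuallyEq hev
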